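/- For every odd integer n ≥ 5, the independence number of the complement C̄_n of the n-cycle equals 2, and the quantum bound (1 + cos(π/n))/cos(π/n) of the anti-hole inequality strictly exceeds 2; i.e. the canonical anti-hole non-contextuality inequality ∑_{i=1}^n p_i ≤ 2 is violated by quantum theory. -/

import Mathlib

/-!
Pairwise non-adjacent vertices of `C̄_n` are pairwise adjacent in `C_n`, and `C_n` is
triangle-free once `n ≥ 4`; `{1, 2}` is such a pair. The quantum bound is `1 + 1 / cos (π / n)`,
which exceeds `2` because `0 < cos (π / n) < 1`.
-/

/-- Adjacency in the complement `C̄_n` of the `n`-cycle on the vertices `1, …, n`: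
`i` and `j` are adjacent iff `i ≠ j` and `i - j ≢ ±1 (mod n)`.  Here `i % n + 1` is the
cyclic successor of a vertex `i ∈ {1, …, n}`. -/
def antiCycleAdj (n i j : ℕ) : Prop :=
  i ≠ j ∧ ¬(i % n + 1 = j ∨ j % n + 1 = i)

open Real

lemma mod_add_one_eq_iff {n i j : ℕ} (hi : i ≤ n) :
    i % n + 1 = j ↔ i < n ∧ j = i + 1 ∨ i = n ∧ j = 1 := by
  rcases hi.lt_or_eq with hi | rfl
  · rw [Nat.mod_eq_of_lt hi]; omega
  · rw [Nat.mod_self]; omega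

lemma not_antiCycleAdj_iff {n i j : ℕ} (hi : i ≤ n) (hj : j ≤ n) :
    ¬antiCycleAdj n i j ↔
      i = j ∨ i < n ∧ j = i + 1 ∨ i = n ∧ j = 1 ∨ j < n ∧ i = j + 1 ∨ j = n ∧ i = 1 := by
  rw [antiCycleAdj, mod_add_one_eq_iff hi, mod_add_one_eq_iff hj]
  tauto

lemma antiCycle_independent_card_le_two {n : ℕ} (hn : 4 ≤ n) {S : Finset ℕ}
    (hS : ∀ i ∈ S, i ≤ n) (hind : ∀ i ∈ S, ∀ j ∈ S, i ≠ j → ¬antiCycleAdj n i j) :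
    S.card ≤ 2 := by
  by_contra! h
  obtain ⟨a, ha, b, hb, c, hc, hab, hac, hbc⟩ := Finset.two_lt_card.mp h
  have hab' := (not_antiCycleAdj_iff (hS a ha) (hS b hb)).mp (hind a ha b hb hab)
  have hac' := (not_antiCycleAdj_iff (hS a ha) (hS c hc)).mp (hind a ha c hc hac)
  have hbc' := (not_antiCycleAdj_iff (hS b hb) (hS c hc)).mp (hind b hb c hc hbc)
  omega

lemma antiCycle_independent_one_two {n : ℕ} (hn : 2 ≤ n) :
    ∀ i ∈ ({1, 2} : Finset ℕ), ∀ j ∈ ({1, 2} : Finset ℕ), i ≠ j → ¬antiCycleAdj n i j := by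
  simp only [Finset.mem_insert, Finset.mem_singleton]
  rintro i hi j hj -
  rw [not_antiCycleAdj_iff (by omega) (by omega)]
  omega

lemma two_lt_one_add_div_self {c : ℝ} (h0 : 0 < c) (h1 : c < 1) : 2 < (1 + c) / c := by
  rw [lt_div_iff₀ h0]; linarith

lemma cos_pi_div_pos {n : ℕ} (hn : 2 < n) : 0 < cos (π / n) := by
  apply cos_pos_of_mem_Ioo
  constructor
  · have : 0 < π / n := by positivity
    linarith [pi_pos]
  · gcongr
    exact_mod_cast hn

lemma cos_pi_div_lt_one {n : ℕ} (hn : 0 < n) : cos (π / n) < 1 := by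
  rw [← cos_zero]
  apply cos_lt_cos_of_nonneg_of_le_pi le_rfl
  · exact div_le_self pi_pos.le (by exact_mod_cast hn)
  · positivity

theorem antiCycle_independence_and_quantum_violation_general (n : ℕ) (hn : 5 ≤ n) :
    IsGreatest
      {k : ℕ | ∃ S : Finset ℕ,
        (∀ i ∈ S, 1 ≤ i ∧ i ≤ n) ∧
        (∀ i ∈ S, ∀ j ∈ S, i ≠ j → ¬antiCycleAdj n i j) ∧
        S.card = k} 2 ∧
    (2 : ℝ) < (1 + Real.cos (Real.pi / n)) / Real.cos (Real.pi / n) := by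
  refine ⟨⟨⟨{1, 2}, ?_, antiCycle_independent_one_two (by omega), rfl⟩, ?_⟩, ?_⟩
  · simp only [Finset.mem_insert, Finset.mem_singleton]
    omega
  · rintro k ⟨S, hS, hind, rfl⟩
    exact antiCycle_independent_card_le_two (by omega) (fun i hi ↦ (hS i hi).2) hind
  · exact two_lt_one_add_div_self (cos_pi_div_pos (by omega)) (cos_pi_div_lt_one (by omega))

/-- For every odd `n ≥ 5`, the independence number of `C̄_n` (the largest cardinality of a set
of pairwise nonadjacent vertices, i.e. the non-contextual hidden-variable bound of the
canonical anti-hole non-contextuality inequality `∑_{i=1}^n p_i ≤ 2`) equals `2`, and the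
quantum bound `(1 + cos(π/n))/cos(π/n)` (the Lovász theta number of `C̄_n`) strictly exceeds
`2`: quantum theory violates the anti-hole inequality. -/
theorem antiCycle_independence_and_quantum_violation (n : ℕ) (hodd : Odd n) (hn : 5 ≤ n) :
    IsGreatest
      {k : ℕ | ∃ S : Finset ℕ,
        (∀ i ∈ S, 1 ≤ i ∧ i ≤ n) ∧
        (∀ i ∈ S, ∀ j ∈ S, i ≠ j → ¬antiCycleAdj n i j) ∧
        S.card = k} 2 ∧
    (2 : ℝ) < (1 + Real.cos (Real.pi / n)) / Real.cos (Real.pi / n) :=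
  antiCycle_independence_and_quantum_violation_general n hn
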